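/- Let M be an n×n symmetric matrix with integer entries whose distinct eigenvalues are λ_1, …, λ_m, and suppose λ_1, …, λ_l are simple eigenvalues (each of multiplicity one), where 1 ≤ l ≤ m. Define q(x) = ∏_{i=l+1}^{m}(x−λ_i) and suppose q(x) ∈ ℤ[x]. For each k ∈ {1,…,m}, let α_{k,j} = ‖P_{λ_k} e_j‖, where P_{λ_k} is the orthogonal projection of ℝ^n onto the eigenspace of λ_k and e_1, …, e_n is the standard basis of ℝ^n. Then for all i, j ∈ {1,…,n}, there exist signs ε_2, …, ε_l ∈ {±1} such that q(λ_1)·α_{1,i}·α_{1,j} + Σ_{k=2}^{l} q(λ_k)·ε_k·α_{k,i}·α_{k,j} is an integer. -/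

import Mathlib

/-!
`q(M)` is an integer matrix, and by the spectral theorem `q(M) = ∑ₖ q(λₖ) P_{λₖ}`, where the
terms with `k > l` vanish because `λₖ` is a root of `q`. The `(i, j)` entry of `P_{λₖ}` is
`⟪P_{λₖ} eᵢ, P_{λₖ} eⱼ⟫`; for a simple eigenvalue both vectors lie on one line, so this is
`± αₖᵢ αₖⱼ`. Multiplying the resulting integer by the sign of the `k = 1` term gives the claim.
-/

open Polynomial

noncomputable def matrixAngle {n : ℕ} (M : Matrix (Fin n) (Fin n) ℝ) (μ : ℝ) (j : Fin n) : ℝ :=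
  ‖(Submodule.orthogonalProjectionOnto (Module.End.eigenspace (Matrix.toEuclideanLin M) μ)
      (EuclideanSpace.single j (1 : ℝ)) : EuclideanSpace ℝ (Fin n))‖

open Module.End

theorem abs_real_inner_eq_norm_mul_norm_of_finrank_le_one {E : Type*} [NormedAddCommGroup E]
    [InnerProductSpace ℝ E] {K : Submodule ℝ E} [FiniteDimensional ℝ K]
    (hK : Module.finrank ℝ K ≤ 1) {u w : E} (hu : u ∈ K) (hw : w ∈ K) :
    |inner ℝ u w| = ‖u‖ * ‖w‖ := by
  obtain ⟨v, hv⟩ := K.finrank_le_one_iff_isPrincipal.1 hK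
  rw [hv] at hu hw
  obtain ⟨a, rfl⟩ := Submodule.mem_span_singleton.1 hu
  obtain ⟨b, rfl⟩ := Submodule.mem_span_singleton.1 hw
  rw [real_inner_smul_left, real_inner_smul_right, real_inner_self_eq_norm_sq, norm_smul,
    norm_smul, abs_mul, abs_mul, Real.norm_eq_abs, Real.norm_eq_abs, abs_sq]
  ring

theorem exists_sign_real_inner_eq_of_finrank_le_one {E : Type*} [NormedAddCommGroup E]
    [InnerProductSpace ℝ E] {K : Submodule ℝ E} [FiniteDimensional ℝ K]
    (hK : Module.finrank ℝ K ≤ 1) {u w : E} (hu : u ∈ K) (hw : w ∈ K) :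
    ∃ σ : ℝ, (σ = 1 ∨ σ = -1) ∧ inner ℝ u w = σ * (‖u‖ * ‖w‖) := by
  rcases (abs_eq (by positivity)).1 (abs_real_inner_eq_norm_mul_norm_of_finrank_le_one hK hu hw)
    with h | h
  · exact ⟨1, Or.inl rfl, by rw [h, one_mul]⟩
  · exact ⟨-1, Or.inr rfl, by rw [h, neg_one_mul]⟩

namespace LinearMap.IsSymmetric

variable {𝕜 E : Type*} [RCLike 𝕜] [NormedAddCommGroup E] [InnerProductSpace 𝕜 E]
  [FiniteDimensional 𝕜 E] {T : E →ₗ[𝕜] E}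

theorem sum_starProjection_eigenspaces (hT : T.IsSymmetric) {s : Finset 𝕜}
    (hs : ∀ μ, HasEigenvalue T μ → μ ∈ s) (x : E) :
    ∑ μ ∈ s, (eigenspace T μ).starProjection x = x := by
  have hspan : (⨆ μ : s, eigenspace T μ) = ⊤ := by
    refine Submodule.orthogonal_eq_bot_iff.1 (eq_bot_iff.2 ?_)
    rw [← hT.orthogonalComplement_iSup_eigenspaces_eq_bot]
    refine Submodule.orthogonal_le (iSup_le fun μ => ?_)
    by_cases hμ : HasEigenvalue T μ
    · exact le_iSup (fun ν : s => eigenspace T ν) ⟨μ, hs μ hμ⟩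
    · rw [hasEigenvalue_iff, not_ne_iff] at hμ
      simp [hμ]
  rw [← Finset.sum_coe_sort]
  exact (hT.orthogonalFamily_eigenspaces.comp Subtype.coe_injective).sum_projection_of_mem_iSup
    x (hspan ▸ Submodule.mem_top)

theorem inner_aeval_eq_sum (hT : T.IsSymmetric) {s : Finset 𝕜}
    (hs : ∀ μ, HasEigenvalue T μ → μ ∈ s) (p : 𝕜[X]) (x y : E) :
    inner 𝕜 x (aeval T p y) = ∑ μ ∈ s, p.eval μ *
      inner 𝕜 ((eigenspace T μ).starProjection x) ((eigenspace T μ).starProjection y) := by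
  conv_lhs => rw [← hT.sum_starProjection_eigenspaces hs y]
  rw [map_sum, inner_sum]
  refine Finset.sum_congr rfl fun μ _ => ?_
  have hy : T ((eigenspace T μ).starProjection y) = μ • (eigenspace T μ).starProjection y :=
    mem_eigenspace_iff.1 (Submodule.starProjection_apply_mem _ y)
  rw [aeval_apply_of_mem_apply_eq_smul hy, inner_smul_right,
    Submodule.inner_starProjection_left_eq_right,
    Submodule.starProjection_eq_self_iff.2 (Submodule.starProjection_apply_mem _ y)]

end LinearMap.IsSymmetric

namespace Matrix

variable {𝕜 ι : Type*} [RCLike 𝕜] [Fintype ι] [DecidableEq ι]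

theorem toEuclideanLin_aeval (A : Matrix ι ι 𝕜) (p : 𝕜[X]) :
    toEuclideanLin (aeval A p) = aeval (toEuclideanLin A) p :=
  (aeval_algHom_apply (toLpLinAlgEquiv 2).toAlgHom A p).symm

theorem inner_single_toEuclideanLin_single (A : Matrix ι ι 𝕜) (i j : ι) :
    inner 𝕜 (EuclideanSpace.single i (1 : 𝕜)) (toEuclideanLin A (EuclideanSpace.single j 1)) =
      A i j := by
  simp [EuclideanSpace.inner_single_left, mulVec_single]

theorem IsHermitian.aeval_apply_eq_sum {A : Matrix ι ι 𝕜} (hA : A.IsHermitian) {s : Finset 𝕜}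
    (hs : ∀ μ, HasEigenvalue (toEuclideanLin A) μ → μ ∈ s) (p : 𝕜[X]) (i j : ι) :
    aeval A p i j = ∑ μ ∈ s, p.eval μ *
      inner 𝕜 ((eigenspace (toEuclideanLin A) μ).starProjection (EuclideanSpace.single i 1))
        ((eigenspace (toEuclideanLin A) μ).starProjection (EuclideanSpace.single j 1)) := by
  rw [← inner_single_toEuclideanLin_single (aeval A p), toEuclideanLin_aeval,
    (isSymmetric_toEuclideanLin_iff.2 hA).inner_aeval_eq_sum hs]

theorem aeval_map_intCast {R : Type*} [Ring R] (M : Matrix ι ι ℤ) (q : ℤ[X]) :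
    aeval (M.map ((↑) : ℤ → R)) q = (aeval M q).map ((↑) : ℤ → R) :=
  aeval_algHom_apply ((Int.castRingHom R).mapMatrix : Matrix ι ι ℤ →+* Matrix ι ι R).toIntAlgHom M q

theorem IsSymm.intCast_aeval_apply_eq_sum {M : Matrix ι ι ℤ} (hM : M.IsSymm) {s : Finset ℝ}
    (hs : ∀ μ, HasEigenvalue (toEuclideanLin (M.map ((↑) : ℤ → ℝ))) μ → μ ∈ s) (q : ℤ[X])
    (i j : ι) :
    ((aeval M q i j : ℤ) : ℝ) = ∑ μ ∈ s, aeval μ q *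
      inner ℝ ((eigenspace (toEuclideanLin (M.map ((↑) : ℤ → ℝ))) μ).starProjection
          (EuclideanSpace.single i 1))
        ((eigenspace (toEuclideanLin (M.map ((↑) : ℤ → ℝ))) μ).starProjection
          (EuclideanSpace.single j 1)) := by
  have hA : (M.map ((↑) : ℤ → ℝ)).IsHermitian := isHermitian_iff_isSymm.2 (hM.map _)
  rw [← map_apply (f := ((↑) : ℤ → ℝ)), ← aeval_map_intCast, ← aeval_map_algebraMap ℝ,
    hA.aeval_apply_eq_sum hs]
  simp only [eval_map_algebraMap]

end Matrix

theorem exists_signs_sum_eq_int_of_sum_eq_int {l : ℕ} (hl : 1 ≤ l) {c b x y : ℕ → ℝ}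
    (hb : ∀ k ∈ Finset.Icc 1 l, ∃ σ : ℝ, (σ = 1 ∨ σ = -1) ∧ b k = σ * (x k * y k))
    {z : ℤ} (hz : ∑ k ∈ Finset.Icc 1 l, c k * b k = z) :
    ∃ ε : ℕ → ℝ, (∀ k, ε k = 1 ∨ ε k = -1) ∧ ∃ z' : ℤ,
      c 1 * x 1 * y 1 + ∑ k ∈ Finset.Ioc 1 l, c k * ε k * x k * y k = z' := by
  have hb' : ∀ k, ∃ σ : ℝ, (σ = 1 ∨ σ = -1) ∧ (k ∈ Finset.Icc 1 l → b k = σ * (x k * y k)) :=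
    fun k => by
      by_cases hk : k ∈ Finset.Icc 1 l
      · obtain ⟨σ, hσ, h⟩ := hb k hk
        exact ⟨σ, hσ, fun _ => h⟩
      · exact ⟨1, Or.inl rfl, fun h => absurd h hk⟩
  choose σ hσ hσb using hb'
  refine ⟨fun k => σ 1 * σ k, fun k => ?_, ?_⟩
  · rcases hσ 1 with h1 | h1 <;> rcases hσ k with h | h <;> simp [h1, h]
  have hσ1 : σ 1 * σ 1 = 1 := by rcases hσ 1 with h1 | h1 <;> simp [h1]
  have key : c 1 * x 1 * y 1 + ∑ k ∈ Finset.Ioc 1 l, c k * (σ 1 * σ k) * x k * y k =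
      σ 1 * z := by
    rw [← hz, Finset.Icc_eq_cons_Ioc hl, Finset.sum_cons, mul_add, Finset.mul_sum,
      hσb 1 (Finset.mem_Icc.2 ⟨le_rfl, hl⟩)]
    congr 1
    · linear_combination (-(c 1 * x 1 * y 1)) * hσ1
    · refine Finset.sum_congr rfl fun k hk => ?_
      rw [hσb k (Finset.Ioc_subset_Icc_self hk)]
      ring
  rcases hσ 1 with h1 | h1
  · exact ⟨z, by rw [key, h1, one_mul]⟩
  · exact ⟨-z, by rw [key, h1]; push_cast; ring⟩

theorem angles_integrality_general (n m l : ℕ) (hl : 1 ≤ l) (hlm : l ≤ m)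
    (M : Matrix (Fin n) (Fin n) ℤ) (hsym : M.IsSymm)
    (ev : ℕ → ℝ)
    (hdist : ∀ i j, 1 ≤ i → i ≤ m → 1 ≤ j → j ≤ m → ev i = ev j → i = j)
    (hall : ∀ μ : ℝ,
      Module.End.HasEigenvalue (Matrix.toEuclideanLin (M.map ((↑) : ℤ → ℝ))) μ →
      ∃ i, 1 ≤ i ∧ i ≤ m ∧ ev i = μ)
    (hsimple : ∀ i, 1 ≤ i → i ≤ l →
      Module.finrank ℝ
        (Module.End.eigenspace (Matrix.toEuclideanLin (M.map ((↑) : ℤ → ℝ))) (ev i)) = 1)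
    (q : Polynomial ℤ)
    (hq : q.map (Int.castRingHom ℝ) = ∏ i ∈ Finset.Ioc l m, (X - C (ev i))) :
    ∀ i j : Fin n, ∃ ε : ℕ → ℝ, (∀ k, ε k = 1 ∨ ε k = -1) ∧
      ∃ z : ℤ,
        (Polynomial.aeval (ev 1) q) *
            matrixAngle (M.map ((↑) : ℤ → ℝ)) (ev 1) i *
            matrixAngle (M.map ((↑) : ℤ → ℝ)) (ev 1) j
          + ∑ k ∈ Finset.Ioc 1 l,
              (Polynomial.aeval (ev k) q) * ε k *
                matrixAngle (M.map ((↑) : ℤ → ℝ)) (ev k) i *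
                matrixAngle (M.map ((↑) : ℤ → ℝ)) (ev k) j
          = (z : ℝ) := by
  intro i j
  set T := Matrix.toEuclideanLin (M.map ((↑) : ℤ → ℝ))
  set P : ℕ → EuclideanSpace ℝ (Fin n) → EuclideanSpace ℝ (Fin n) :=
    fun k => (eigenspace T (ev k)).starProjection
  have hs : ∀ μ, HasEigenvalue T μ → μ ∈ (Finset.Icc 1 m).image ev := fun μ hμ => by
    obtain ⟨k, hk1, hkm, rfl⟩ := hall μ hμ
    exact Finset.mem_image_of_mem ev (Finset.mem_Icc.2 ⟨hk1, hkm⟩)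
  have hinj : Set.InjOn ev (Finset.Icc 1 m) := fun k hk k' hk' => by
    simp only [Finset.coe_Icc, Set.mem_Icc] at hk hk'
    exact hdist k k' hk.1 hk.2 hk'.1 hk'.2
  have hroot : ∀ k ∈ Finset.Ioc l m, aeval (ev k) q = 0 := fun k hk => by
    rw [← eval_map_algebraMap, algebraMap_int_eq, hq, eval_prod]
    exact Finset.prod_eq_zero hk (by simp)
  have hspectral : ∑ k ∈ Finset.Icc 1 l, aeval (ev k) q *
      inner ℝ (P k (EuclideanSpace.single i 1)) (P k (EuclideanSpace.single j 1)) =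
        ((aeval M q i j : ℤ) : ℝ) := by
    rw [hsym.intCast_aeval_apply_eq_sum hs, Finset.sum_image hinj]
    refine Finset.sum_subset (Finset.Icc_subset_Icc_right hlm) fun k hk hkl => ?_
    have hk' : k ∈ Finset.Ioc l m := by
      simp only [Finset.mem_Icc, Finset.mem_Ioc] at hk hkl ⊢
      omega
    rw [hroot k hk', zero_mul]
  refine exists_signs_sum_eq_int_of_sum_eq_int hl
    (x := fun k => matrixAngle (M.map ((↑) : ℤ → ℝ)) (ev k) i)
    (y := fun k => matrixAngle (M.map ((↑) : ℤ → ℝ)) (ev k) j) (fun k hk => ?_) hspectral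
  obtain ⟨hk1, hkl⟩ := Finset.mem_Icc.1 hk
  exact exists_sign_real_inner_eq_of_finrank_le_one (hsimple k hk1 hkl).le
    (Submodule.starProjection_apply_mem _ _) (Submodule.starProjection_apply_mem _ _)

/-- Let `M` be a symmetric integer matrix whose distinct eigenvalues are
`ev 1, …, ev m`, the first `l` of which are simple (`1 ≤ l ≤ m`).  Suppose
`q(x) = ∏_{i=l+1}^m (x - ev i)` has integer coefficients.  Then for all
`i, j`, there are signs `ε_2, …, ε_l ∈ {±1}` such that
`q(ev 1)·α_{1,i}·α_{1,j} + Σ_{k=2}^l q(ev k)·ε_k·α_{k,i}·α_{k,j}` is an integer. -/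
theorem angles_integrality (n m l : ℕ) (hl : 1 ≤ l) (hlm : l ≤ m)
    (M : Matrix (Fin n) (Fin n) ℤ) (hsym : M.IsSymm)
    (ev : ℕ → ℝ)
    (hdist : ∀ i j, 1 ≤ i → i ≤ m → 1 ≤ j → j ≤ m → ev i = ev j → i = j)
    (heig : ∀ i, 1 ≤ i → i ≤ m →
      Module.End.HasEigenvalue (Matrix.toEuclideanLin (M.map ((↑) : ℤ → ℝ))) (ev i))
    (hall : ∀ μ : ℝ,
      Module.End.HasEigenvalue (Matrix.toEuclideanLin (M.map ((↑) : ℤ → ℝ))) μ →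
      ∃ i, 1 ≤ i ∧ i ≤ m ∧ ev i = μ)
    (hsimple : ∀ i, 1 ≤ i → i ≤ l →
      Module.finrank ℝ
        (Module.End.eigenspace (Matrix.toEuclideanLin (M.map ((↑) : ℤ → ℝ))) (ev i)) = 1)
    (q : Polynomial ℤ)
    (hq : q.map (Int.castRingHom ℝ) = ∏ i ∈ Finset.Ioc l m, (X - C (ev i))) :
    ∀ i j : Fin n, ∃ ε : ℕ → ℝ, (∀ k, ε k = 1 ∨ ε k = -1) ∧
      ∃ z : ℤ,
        (Polynomial.aeval (ev 1) q) *
            matrixAngle (M.map ((↑) : ℤ → ℝ)) (ev 1) i *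
            matrixAngle (M.map ((↑) : ℤ → ℝ)) (ev 1) j
          + ∑ k ∈ Finset.Ioc 1 l,
              (Polynomial.aeval (ev k) q) * ε k *
                matrixAngle (M.map ((↑) : ℤ → ℝ)) (ev k) i *
                matrixAngle (M.map ((↑) : ℤ → ℝ)) (ev k) j
          = (z : ℝ) :=
  angles_integrality_general n m l hl hlm M hsym ev hdist hall hsimple q hq
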